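/- If e is an edge of a finite connected simple graph G, then gp(G)/2 ≤ gp(G − e) ≤ 2 · gp(G), where G − e is the graph obtained from G by deleting the edge e. -/

import Mathlib

open SimpleGraph

variable {V : Type*}

/-- `S` is a general position set of `G`: no three pairwise distinct vertices of `S`
(lying in a common component) lie on a common shortest path, i.e. no `v ∈ S` lies
strictly between `u, w ∈ S`. -/
def IsGPSet (G : SimpleGraph V) (S : Set V) : Prop :=
  ∀ u ∈ S, ∀ v ∈ S, ∀ w ∈ S, u ≠ v → v ≠ w → u ≠ w →
    ¬(G.Reachable u w ∧ G.dist u v + G.dist v w = G.dist u w)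

/-- The general position number of `G`. -/
noncomputable def gpNum (G : SimpleGraph V) [Fintype V] : ℕ :=
  sSup {n | ∃ S : Finset V, IsGPSet G ↑S ∧ S.card = n}

open Finset

/-!
Split the vertices according to whether they are (weakly) closer to `x` or strictly closer to
`y`, where `e = xy`. A shortest path between two vertices on the same side never needs the
edge `e`, so on each side distances, and hence general position, are the same in `G` and
in `G - e`. Restricting a maximum general position set of either graph to the larger side
therefore gives a general position set of the other graph of at least half its size.
-/

namespace SimpleGraph

variable {G : SimpleGraph V} {a b x y : V}

lemma Walk.dist_add_one_add_dist_le_length_of_mem_edges (p : G.Walk a b)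
    (hp : s(x, y) ∈ p.edges) :
    G.dist a x + 1 + G.dist y b ≤ p.length ∨ G.dist a y + 1 + G.dist x b ≤ p.length := by
  induction p with
  | nil => simp at hp
  | @cons a c b h q ih =>
    have hq := G.dist_le q
    rw [Walk.edges_cons, List.mem_cons, Sym2.eq_iff] at hp
    simp only [Walk.length_cons]
    rcases hp with (⟨rfl, rfl⟩ | ⟨rfl, rfl⟩) | hp
    · left; simp only [dist_self]; omega
    · right; simp only [dist_self]; omega
    · have hac : G.dist a c ≤ 1 := G.dist_le h.toWalk
      have hx := h.reachable.dist_triangle_left x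
      have hy := h.reachable.dist_triangle_left y
      have := ih hp
      omega

lemma Walk.notMem_edges_of_length_eq_dist (p : G.Walk a b) (hp : p.length = G.dist a b)
    (ha : G.dist a x ≤ G.dist a y) (hb : G.dist b x ≤ G.dist b y) : s(x, y) ∉ p.edges := by
  classical
  intro hxy
  have hxb := (p.dropUntil x (p.fst_mem_support_of_mem_edges hxy)).reachable
  have htri := hxb.dist_triangle_right a
  have hbx : G.dist x b = G.dist b x := dist_comm
  have hby : G.dist y b = G.dist b y := dist_comm
  rcases p.dist_add_one_add_dist_le_length_of_mem_edges hxy with h | h <;> omega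

lemma Reachable.exists_walk_deleteEdges_length_eq_dist (hr : G.Reachable a b)
    (ha : G.dist a x ≤ G.dist a y) (hb : G.dist b x ≤ G.dist b y) :
    ∃ p : (G.deleteEdges {s(x, y)}).Walk a b, p.length = G.dist a b := by
  obtain ⟨p, hp⟩ := hr.exists_walk_length_eq_dist
  have hp' : ∀ e ∈ p.edges, e ∉ ({s(x, y)} : Set (Sym2 V)) := by
    rintro e he rfl
    exact p.notMem_edges_of_length_eq_dist hp ha hb he
  exact ⟨p.toDeleteEdges _ hp', (Walk.length_transfer p _).trans hp⟩

lemma reachable_deleteEdges_iff_of_dist_le (ha : G.dist a x ≤ G.dist a y)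
    (hb : G.dist b x ≤ G.dist b y) :
    (G.deleteEdges {s(x, y)}).Reachable a b ↔ G.Reachable a b :=
  ⟨fun h => h.mono (G.deleteEdges_le _),
    fun hr => (hr.exists_walk_deleteEdges_length_eq_dist ha hb).elim fun p _ => p.reachable⟩

lemma dist_deleteEdges_of_dist_le (ha : G.dist a x ≤ G.dist a y)
    (hb : G.dist b x ≤ G.dist b y) :
    (G.deleteEdges {s(x, y)}).dist a b = G.dist a b := by
  by_cases hr : G.Reachable a b
  · obtain ⟨p, hp⟩ := hr.exists_walk_deleteEdges_length_eq_dist ha hb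
    exact le_antisymm (hp ▸ dist_le p) (p.reachable.dist_anti (G.deleteEdges_le _))
  · have hr' : ¬(G.deleteEdges {s(x, y)}).Reachable a b :=
      fun h => hr (h.mono (G.deleteEdges_le _))
    rw [dist_eq_zero_of_not_reachable hr, dist_eq_zero_of_not_reachable hr']

end SimpleGraph

lemma IsGPSet.subset {G : SimpleGraph V} {S T : Set V} (hT : IsGPSet G T) (hST : S ⊆ T) :
    IsGPSet G S :=
  fun u hu v hv w hw => hT u (hST hu) v (hST hv) w (hST hw)

lemma isGPSet_deleteEdges_iff {G : SimpleGraph V} {x y : V} {T : Set V}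
    (hT : ∀ s ∈ T, G.dist s x ≤ G.dist s y) :
    IsGPSet (G.deleteEdges {s(x, y)}) T ↔ IsGPSet G T := by
  refine forall₂_congr fun u hu => forall₂_congr fun v hv => forall₂_congr fun w hw => ?_
  rw [reachable_deleteEdges_iff_of_dist_le (hT u hu) (hT w hw),
    dist_deleteEdges_of_dist_le (hT u hu) (hT v hv),
    dist_deleteEdges_of_dist_le (hT v hv) (hT w hw),
    dist_deleteEdges_of_dist_le (hT u hu) (hT w hw)]

section gpNum

variable [Fintype V]

lemma bddAbove_card_isGPSet (G : SimpleGraph V) :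
    BddAbove {n | ∃ S : Finset V, IsGPSet G ↑S ∧ S.card = n} :=
  ⟨Fintype.card V, fun _ ⟨S, _, hS⟩ => hS ▸ S.card_le_univ⟩

lemma card_le_gpNum {G : SimpleGraph V} {S : Finset V} (hS : IsGPSet G ↑S) : #S ≤ gpNum G :=
  le_csSup (bddAbove_card_isGPSet G) ⟨S, hS, rfl⟩

lemma exists_isGPSet_card_eq_gpNum (G : SimpleGraph V) :
    ∃ S : Finset V, IsGPSet G ↑S ∧ #S = gpNum G :=
  Nat.sSup_mem (h₂ := bddAbove_card_isGPSet G) ⟨0, Set.mem_ofPred.2 ⟨∅, by simp [IsGPSet], rfl⟩⟩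

lemma gpNum_le_two_mul_gpNum_of_split {G H : SimpleGraph V} (p : V → Prop)
    (hGH : ∀ T : Set V, ((∀ s ∈ T, p s) ∨ ∀ s ∈ T, ¬p s) → IsGPSet G T → IsGPSet H T) :
    gpNum G ≤ 2 * gpNum H := by
  classical
  obtain ⟨S, hS, hcard⟩ := exists_isGPSet_card_eq_gpNum G
  have hpos : #(S.filter p) ≤ gpNum H :=
    card_le_gpNum <| hGH _ (.inl fun s hs => (mem_filter.1 hs).2) <|
      hS.subset (coe_subset.2 (filter_subset _ _))
  have hneg : #(S.filter (¬p ·)) ≤ gpNum H :=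
    card_le_gpNum <| hGH _ (.inr fun s hs => (mem_filter.1 hs).2) <|
      hS.subset (coe_subset.2 (filter_subset _ _))
  have := card_filter_add_card_filter_not (s := S) p
  omega

end gpNum

theorem gp_deleteEdge_bounds_general [Fintype V] (G : SimpleGraph V)
    (e : Sym2 V) :
    gpNum G ≤ 2 * gpNum (G.deleteEdges {e}) ∧
      gpNum (G.deleteEdges {e}) ≤ 2 * gpNum G := by
  induction e using Sym2.ind with
  | _ x y =>
  have transfer : ∀ T : Set V,
      ((∀ s ∈ T, G.dist s x ≤ G.dist s y) ∨ ∀ s ∈ T, ¬G.dist s x ≤ G.dist s y) →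
      (IsGPSet (G.deleteEdges {s(x, y)}) T ↔ IsGPSet G T) := by
    rintro T (hT | hT)
    · exact isGPSet_deleteEdges_iff hT
    · rw [Sym2.eq_swap]
      exact isGPSet_deleteEdges_iff fun s hs => (not_le.1 (hT s hs)).le
  exact ⟨gpNum_le_two_mul_gpNum_of_split _ fun T hT => (transfer T hT).2,
    gpNum_le_two_mul_gpNum_of_split _ fun T hT => (transfer T hT).1⟩

/-- `gp(G)/2 ≤ gp(G - e) ≤ 2 gp(G)` for every edge `e` of a connected graph `G`,
where the lower bound `gp(G)/2 ≤ gp(G - e)` is expressed as `gp(G) ≤ 2 gp(G - e)`. -/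
theorem gp_deleteEdge_bounds [Fintype V] (G : SimpleGraph V)
    (hG : G.Connected) (e : Sym2 V) (he : e ∈ G.edgeSet) :
    gpNum G ≤ 2 * gpNum (G.deleteEdges {e}) ∧
      gpNum (G.deleteEdges {e}) ≤ 2 * gpNum G :=
  gp_deleteEdge_bounds_general G e
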